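/- arXiv:1107.4709 — 10 statements merged into one kernel-verified Lean document; each statement's English description precedes it below -/
import Mathlib

section
/- Let K be a positive integer, Ω and Γ finite sets, X a flat distribution on Ω with min-entropy log₂ K (i.e., X is uniform on a support of size K), and f : Ω → Γ an arbitrary map. Then: (1) if the push-forward distribution f(X) is ε-close to some distribution on Γ with min-entropy at least log₂ K, there exists a set T ⊆ Γ of size at least (1−2ε)·K such that for every y ∈ T and all x, x' in the support of X, f(x) = y and f(x') = y imply x = x'; and (2) if |Γ| ≥ K and the support of f(X) has size at least (1−ε)·K, then f(X) is ε-close to some distribution on Γ with min-entropy log₂ K. -/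
/-!
Under the flat source on `A`, `#A = K`, the push-forward `f(X)` gives mass `c_y / K` to `y`, where
`c_y` is the size of the fibre of `y` in `A`. A point with `c_y ≥ 2` carries mass at least `2 / K`,
while a distribution of min-entropy `log₂ K` gives it at most `1 / K` (and so needs `|Γ| ≥ K`);
each such point thus contributes `1 / K` to the `ℓ¹` distance, so at most `2εK` points collide and
the remaining ones, at least `|Γ| - 2εK ≥ (1 - 2ε)K` of them, have injective fibres. Conversely,
the flat distribution on any `K`-set containing `f(A)` is at distance exactly `1 - |f(A)| / K`
from `f(X)`.
-/

noncomputable def statDist {Ω : Type*} [Fintype Ω] (p q : Ω → ℝ) : ℝ :=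
  (∑ x, |p x - q x|) / 2

def IsDist {Ω : Type*} [Fintype Ω] (p : Ω → ℝ) : Prop :=
  (∀ x, 0 ≤ p x) ∧ (∑ x, p x) = 1

def minEntropyGe {Ω : Type*} [Fintype Ω] (p : Ω → ℝ) (b : ℝ) : Prop :=
  ∀ x, p x ≤ (2 : ℝ) ^ (-b)

noncomputable def pushforward {Ω Γ : Type*} [Fintype Ω] [DecidableEq Γ]
    (f : Ω → Γ) (p : Ω → ℝ) : Γ → ℝ :=
  fun y => ∑ x, if f x = y then p x else 0

open Finset

section

variable {Ω Γ : Type*} [Fintype Ω] [Fintype Γ]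

theorem minEntropyGe_logb_two_iff {q : Γ → ℝ} {K : ℝ} (hK : 0 < K) :
    minEntropyGe q (Real.logb 2 K) ↔ ∀ y, q y ≤ K⁻¹ := by
  rw [minEntropyGe, Real.rpow_neg zero_le_two, Real.rpow_logb zero_lt_two (by norm_num) hK]

theorem one_le_card_mul_of_isDist {q : Γ → ℝ} {t : ℝ} (hq : IsDist q) (hle : ∀ y, q y ≤ t) :
    1 ≤ Fintype.card Γ * t := by
  calc 1 = ∑ y, q y := hq.2.symm
    _ ≤ ∑ _y : Γ, t := sum_le_sum fun y _ => hle y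
    _ = Fintype.card Γ * t := by rw [sum_const, card_univ, nsmul_eq_mul]

theorem card_mul_le_two_mul_statDist {p q : Γ → ℝ} {s : Finset Γ} {δ : ℝ}
    (hs : ∀ y ∈ s, δ ≤ |p y - q y|) : #s * δ ≤ 2 * statDist p q := by
  calc #s * δ = ∑ _y ∈ s, δ := by rw [sum_const, nsmul_eq_mul]
    _ ≤ ∑ y ∈ s, |p y - q y| := sum_le_sum hs
    _ ≤ ∑ y, |p y - q y| := sum_le_sum_of_subset_of_nonneg (subset_univ s) fun _ _ _ => abs_nonneg _
    _ = 2 * statDist p q := by rw [statDist]; ring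

theorem isDist_pushforward [DecidableEq Γ] {p : Ω → ℝ} (hp : IsDist p) (f : Ω → Γ) :
    IsDist (pushforward f p) := by
  refine ⟨fun y => sum_nonneg fun x _ => ?_, ?_⟩
  · split_ifs
    exacts [hp.1 x, le_rfl]
  · simp only [pushforward]
    rw [sum_comm]
    simp only [sum_ite_eq, mem_univ, if_true]
    exact hp.2

end

section

variable {Ω Γ : Type*} [DecidableEq Ω]

noncomputable def flatDist (A : Finset Ω) : Ω → ℝ := fun x => if x ∈ A then (#A : ℝ)⁻¹ else 0

theorem isDist_flatDist [Fintype Ω] {A : Finset Ω} (hA : A.Nonempty) : IsDist (flatDist A) := by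
  refine ⟨fun x => by unfold flatDist; positivity, ?_⟩
  simp only [flatDist]
  rw [sum_ite_mem, univ_inter, sum_const, nsmul_eq_mul,
    mul_inv_cancel₀ (by exact_mod_cast hA.card_pos.ne')]

theorem flatDist_le (A : Finset Ω) (x : Ω) : flatDist A x ≤ (#A : ℝ)⁻¹ := by
  unfold flatDist
  split_ifs
  exacts [le_rfl, by positivity]

theorem pushforward_flatDist [Fintype Ω] [DecidableEq Γ] (f : Ω → Γ) (A : Finset Ω) (y : Γ) :
    pushforward f (flatDist A) y = #{x ∈ A | f x = y} / #A := by
  simp only [pushforward, flatDist, ← ite_and, ← sum_filter, sum_const, nsmul_eq_mul]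
  rw [div_eq_mul_inv]
  congr 3
  ext x
  simp only [mem_filter, mem_univ, true_and, and_comm]

theorem exists_injOn_fibers_of_statDist_le [Fintype Ω] [Fintype Γ] [DecidableEq Γ]
    (f : Ω → Γ) {A : Finset Ω} (hA : A.Nonempty) {q : Γ → ℝ} (hq : IsDist q)
    (hqle : ∀ y, q y ≤ (#A : ℝ)⁻¹) {ε : ℝ} (hd : statDist (pushforward f (flatDist A)) q ≤ ε) :
    ∃ T : Finset Γ, (1 - 2 * ε) * #A ≤ (#T : ℝ) ∧
      ∀ y ∈ T, ∀ x ∈ A, ∀ x' ∈ A, f x = y → f x' = y → x = x' := by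
  have hK : (0 : ℝ) < #A := by exact_mod_cast hA.card_pos
  let T : Finset Γ := {y | #{x ∈ A | f x = y} ≤ 1}
  refine ⟨T, ?_, fun y hy x hx x' hx' hfx hfx' =>
    card_le_one.1 (mem_filter.1 hy).2 x (mem_filter.2 ⟨hx, hfx⟩) x' (mem_filter.2 ⟨hx', hfx'⟩)⟩
  have hΓ : (#A : ℝ) ≤ Fintype.card Γ := by
    have := one_le_card_mul_of_isDist hq hqle
    rwa [← div_eq_mul_inv, one_le_div hK] at this
  have hcollision : ∀ y ∈ Tᶜ, (#A : ℝ)⁻¹ ≤ |pushforward f (flatDist A) y - q y| := by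
    intro y hy
    have h2 : (2 : ℝ) ≤ #{x ∈ A | f x = y} := by
      simp only [T, mem_compl, mem_filter, mem_univ, true_and, not_le] at hy
      exact_mod_cast hy
    rw [pushforward_flatDist, div_eq_mul_inv]
    refine le_trans ?_ (le_abs_self _)
    nlinarith [hqle y, inv_pos.2 hK]
  have hbad : (#Tᶜ : ℝ) ≤ 2 * ε * #A := by
    rw [← div_le_iff₀ hK, div_eq_mul_inv]
    linarith [card_mul_le_two_mul_statDist hcollision]
  have hcompl : (#Tᶜ : ℝ) = Fintype.card Γ - #T := by
    rw [card_compl, Nat.cast_sub (card_le_univ T)]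
  linarith

theorem statDist_flatDist_eq_of_support_subset [Fintype Γ] [DecidableEq Γ] {p : Γ → ℝ}
    {S B : Finset Γ} (hp : IsDist p) (hSB : S ⊆ B) (hzero : ∀ y ∉ S, p y = 0)
    (hlow : ∀ y ∈ S, (#B : ℝ)⁻¹ ≤ p y) :
    statDist p (flatDist B) = 1 - #S / #B := by
  have hsumS : ∑ y ∈ S, p y = 1 := by
    rw [← hp.2]
    exact sum_subset (subset_univ S) fun y _ hy => hzero y hy
  have hB : (0 : ℝ) < #B := by
    exact_mod_cast ((nonempty_of_sum_ne_zero (hsumS ▸ one_ne_zero)).mono hSB).card_pos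
  have hsplit : ∑ y, |p y - flatDist B y| =
      ∑ _y ∈ B \ S, (#B : ℝ)⁻¹ + ∑ y ∈ S, (p y - (#B : ℝ)⁻¹) := by
    rw [← sum_subset (subset_univ B), ← sum_sdiff hSB]
    · congr 1 <;> refine sum_congr rfl fun y hy => ?_
      · obtain ⟨hyB, hyS⟩ := mem_sdiff.1 hy
        simp [flatDist, hyB, hzero y hyS]
      · rw [flatDist, if_pos (hSB hy), abs_of_nonneg (sub_nonneg.2 (hlow y hy))]
    · intro y _ hyB
      simp [flatDist, hyB, hzero y fun hyS => hyB (hSB hyS)]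
  rw [statDist, hsplit, sum_sub_distrib, hsumS, sum_const, sum_const, card_sdiff_of_subset hSB,
    nsmul_eq_mul, nsmul_eq_mul, Nat.cast_sub (card_le_card hSB)]
  field_simp
  ring

theorem exists_statDist_pushforward_flatDist_eq [Fintype Ω] [Fintype Γ] [DecidableEq Γ]
    (f : Ω → Γ) {A : Finset Ω} (hA : A.Nonempty) (hΓ : #A ≤ Fintype.card Γ) :
    ∃ B : Finset Γ, #B = #A ∧
      statDist (pushforward f (flatDist A)) (flatDist B) = 1 - #(A.image f) / #A := by
  obtain ⟨B, hSB, -, hB⟩ :=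
    exists_subsuperset_card_eq (subset_univ (A.image f)) card_image_le (by rwa [card_univ])
  refine ⟨B, hB, hB ▸ statDist_flatDist_eq_of_support_subset
    (isDist_pushforward (isDist_flatDist hA) f) hSB (fun y hy => ?_) fun y hy => ?_⟩
  · rw [pushforward_flatDist, card_eq_zero.2 (filter_eq_empty_iff.2 fun x hx hfx =>
      hy (mem_image.2 ⟨x, hx, hfx⟩)), Nat.cast_zero, zero_div]
  · obtain ⟨x, hx, rfl⟩ := mem_image.1 hy
    have hfiber : (1 : ℝ) ≤ #{x' ∈ A | f x' = f x} :=
      Nat.one_le_cast.2 (card_pos.2 ⟨x, mem_filter.2 ⟨hx, rfl⟩⟩)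
    rw [pushforward_flatDist, hB, div_eq_mul_inv]
    exact le_mul_of_one_le_left (by positivity) hfiber

end

/-- Almost-injectivity of lossless condensing on flat sources. -/
theorem stmt0 {Ω Γ : Type*} [Fintype Ω] [Fintype Γ] [DecidableEq Ω] [DecidableEq Γ]
    (K : ℕ) (hK : 0 < K) (A : Finset Ω) (hA : A.card = K)
    (p : Ω → ℝ) (hp : ∀ x, p x = if x ∈ A then (K : ℝ)⁻¹ else 0)
    (f : Ω → Γ) (ε : ℝ) :
    ((∃ q : Γ → ℝ, IsDist q ∧ minEntropyGe q (Real.logb 2 K) ∧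
        statDist (pushforward f p) q ≤ ε) →
      ∃ T : Finset Γ, (1 - 2 * ε) * K ≤ (T.card : ℝ) ∧
        ∀ y ∈ T, ∀ x ∈ A, ∀ x' ∈ A, f x = y → f x' = y → x = x') ∧
    (K ≤ Fintype.card Γ → (1 - ε) * K ≤ ((A.image f).card : ℝ) →
      ∃ q : Γ → ℝ, IsDist q ∧ minEntropyGe q (Real.logb 2 K) ∧
        statDist (pushforward f p) q ≤ ε) := by
  obtain rfl : p = flatDist A := funext fun x => by rw [hp, flatDist, hA]
  subst hA
  have hA : A.Nonempty := card_pos.1 hK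
  have hKpos : (0 : ℝ) < #A := by exact_mod_cast hK
  simp only [minEntropyGe_logb_two_iff hKpos]
  refine ⟨fun ⟨q, hq, hqle, hd⟩ => exists_injOn_fibers_of_statDist_le f hA hq hqle hd,
    fun hΓ hS => ?_⟩
  obtain ⟨B, hB, hd⟩ := exists_statDist_pushforward_flatDist_eq f hA hΓ
  refine ⟨flatDist B, isDist_flatDist (card_pos.1 (hB ▸ hK)), fun y => hB ▸ flatDist_le B y, ?_⟩
  rw [hd, sub_le_comm, le_div_iff₀ hKpos]
  exact hS
end

section
/- Let f : F_2^d → F_2 and D : F_2^{d+1} → F_2 be predicates, and suppose that |Pr_{X}[D(X, f(X)) = 1] − Pr_{Y}[D(Y) = 1]| > ε, where X is uniform on F_2^d and Y is uniform on F_2^{d+1}. Then there exist fixed bits a_0, a_1 ∈ F_2 such that Pr_{X}[D(X, a_0) + a_1 = f(X)] > 1/2 + ε, where X is uniform on F_2^d and addition is over F_2. -/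
/-!
Write `p = Pr[D(X, f X) = 1]`, `q = Pr[D(Y) = 1]`, and `h a₀ a₁` for the success rate of the
predictor `x ↦ D(x, a₀) + a₁`. Checking the eight values of `(D(x, 0), D(x, 1), f x)` shows
`h 0 1 + h 1 0 = 1 + 2 (p - q)`; since flipping `a₁` complements the predictor,
`h 0 0 + h 1 1 = 1 - 2 (p - q)`. One of these two pairs sums to more than `1 + 2ε`, so one of its
members exceeds `1/2 + ε`.
-/

open Finset

variable {α : Type*} [Fintype α] (D : α → ZMod 2 → ZMod 2) (f : α → ZMod 2)

def predictorHits (a₀ a₁ : ZMod 2) : ℕ := #{x | D x a₀ + a₁ = f x}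

lemma predictorHits_add_predictorHits_add_one (a₀ a₁ : ZMod 2) :
    predictorHits D f a₀ a₁ + predictorHits D f a₀ (a₁ + 1) = Fintype.card α := by
  have flip : ∀ u w : ZMod 2, u + (a₁ + 1) = w ↔ ¬ u + a₁ = w := by
    revert a₁; decide
  rw [predictorHits, predictorHits, filter_congr fun x _ => flip (D x a₀) (f x),
    card_filter_add_card_filter_not, card_univ]

lemma pointwise_count_identity (g : ZMod 2 → ZMod 2) (w : ZMod 2) :
    ((if g 0 + 1 = w then 1 else 0) + (if g 1 + 0 = w then 1 else 0) +
      ((if g 0 = 1 then 1 else 0) + (if g 1 = 1 then 1 else 0)) : ℕ) =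
      2 * (if g w = 1 then 1 else 0) + 1 := by
  revert g w; decide

lemma predictorHits_zero_one_add_predictorHits_one_zero :
    predictorHits D f 0 1 + predictorHits D f 1 0 + #{y : α × ZMod 2 | D y.1 y.2 = 1} =
      2 * #{x | D x (f x) = 1} + Fintype.card α := by
  simp only [predictorHits, card_filter, Fintype.sum_prod_type, mul_sum,
    ← sum_add_distrib, Fintype.card_eq_sum_ones]
  exact sum_congr rfl fun x _ => pointwise_count_identity (D x) (f x)

noncomputable def advantage : ℝ :=
  (#{x | D x (f x) = 1} : ℝ) / Fintype.card α -
    (#{y : α × ZMod 2 | D y.1 y.2 = 1} : ℝ) / (2 * Fintype.card α)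

variable [Nonempty α]

lemma predictorHits_zero_one_add_one_zero_div_card :
    (predictorHits D f 0 1 + predictorHits D f 1 0 : ℝ) / Fintype.card α =
      1 + 2 * advantage D f := by
  have hN : (Fintype.card α : ℝ) ≠ 0 := Nat.cast_ne_zero.mpr Fintype.card_ne_zero
  have h := congrArg (Nat.cast : ℕ → ℝ) (predictorHits_zero_one_add_predictorHits_one_zero D f)
  push_cast at h
  rw [advantage]
  field_simp
  linarith

lemma predictorHits_zero_zero_add_one_one_div_card :
    (predictorHits D f 0 0 + predictorHits D f 1 1 : ℝ) / Fintype.card α =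
      1 - 2 * advantage D f := by
  have hN : (Fintype.card α : ℝ) ≠ 0 := Nat.cast_ne_zero.mpr Fintype.card_ne_zero
  have h0 := congrArg (Nat.cast : ℕ → ℝ) (predictorHits_add_predictorHits_add_one D f 0 0)
  have h1 := congrArg (Nat.cast : ℕ → ℝ) (predictorHits_add_predictorHits_add_one D f 1 0)
  push_cast [zero_add] at h0 h1
  rw [show 1 - 2 * advantage D f = 2 - (1 + 2 * advantage D f) by ring,
    ← predictorHits_zero_one_add_one_zero_div_card]
  field_simp
  linarith

theorem exists_predictorHits_gt {ε : ℝ} (hbias : ε < |advantage D f|) :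
    ∃ a₀ a₁ : ZMod 2, 1 / 2 + ε < (predictorHits D f a₀ a₁ : ℝ) / Fintype.card α := by
  have pigeonhole : ∀ a b c d : ZMod 2,
      1 + 2 * ε < (predictorHits D f a b + predictorHits D f c d : ℝ) / Fintype.card α →
      ∃ a₀ a₁ : ZMod 2, 1 / 2 + ε < (predictorHits D f a₀ a₁ : ℝ) / Fintype.card α := by
    intro a b c d h
    by_contra! hle
    linarith [hle a b, hle c d, add_div (predictorHits D f a b : ℝ) (predictorHits D f c d)
      (Fintype.card α)]
  rcases lt_abs.mp hbias with hpos | hneg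
  · exact pigeonhole 0 1 1 0 (by linarith [predictorHits_zero_one_add_one_zero_div_card D f])
  · exact pigeonhole 0 0 1 1 (by linarith [predictorHits_zero_zero_add_one_one_div_card D f])

/-- Distinguishers can be turned into predictors. -/
theorem stmt2 (d : ℕ) (f : (Fin d → ZMod 2) → ZMod 2)
    (D : (Fin d → ZMod 2) → ZMod 2 → ZMod 2) (ε : ℝ)
    (hbias : ε <
      |((Finset.univ.filter (fun x : Fin d → ZMod 2 => D x (f x) = 1)).card : ℝ) / 2 ^ d -
        ((Finset.univ.filter
          (fun y : (Fin d → ZMod 2) × ZMod 2 => D y.1 y.2 = 1)).card : ℝ) / 2 ^ (d + 1)|) :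
    ∃ a₀ a₁ : ZMod 2,
      1 / 2 + ε <
        ((Finset.univ.filter
          (fun x : Fin d → ZMod 2 => D x a₀ + a₁ = f x)).card : ℝ) / 2 ^ d := by
  have hcard : (Fintype.card (Fin d → ZMod 2) : ℝ) = 2 ^ d := by simp
  rw [pow_succ', ← hcard] at hbias
  simpa only [hcard, predictorHits] using exists_predictorHits_gt D f hbias
end

section
/- Let q be a prime power, let X be the uniform distribution on a k-dimensional affine subspace of F_q^n, let f : F_q^n → F_q^m be an F_q-linear map, and let Y be the distribution of f(X) for X drawn from X. Let 0 ≤ ε < 1/2. Then: (i) if Y is ε-close to the uniform distribution on F_q^m, then Y is exactly the uniform distribution on F_q^m; and (ii) if, for an integer k', Y is ε-close to some distribution with min-entropy at least k'·log₂ q, then Y itself has min-entropy at least k'·log₂ q. -/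
/-- The uniform distribution on a finite type. -/
noncomputable def unif (Ω : Type*) [Fintype Ω] : Ω → ℝ :=
  fun _ => (Fintype.card Ω : ℝ)⁻¹

/-! The image of a uniform affine source under a linear map is uniform on an affine subspace,
i.e. on a set of exactly `q ^ d` points. A distribution `r ≤ q ^ (-t)` with `t > d` puts mass at
most `q ^ d / q ^ t ≤ 1 / q ≤ 1 / 2` on that set, so it is at distance at least `1 / 2` from the
image. Hence closeness below `1 / 2` forces `t ≤ d`, and then the image itself is bounded by
`q ^ (-d) ≤ q ^ (-t)`; for the uniform target, `t = m` makes the image uniform on everything. -/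

open Finset

noncomputable def unifOn {Ω : Type*} (s : Finset Ω) : Ω → ℝ :=
  Set.indicator s fun _ => (#s : ℝ)⁻¹

theorem unifOn_le_inv_card {Ω : Type*} (s : Finset Ω) (x : Ω) : unifOn s x ≤ (#s : ℝ)⁻¹ :=
  Set.indicator_le_self' (fun _ _ => by positivity) x

section Distributions

variable {Ω : Type*} [Fintype Ω]

theorem sum_unifOn {s : Finset Ω} (hs : s.Nonempty) : ∑ x, unifOn s x = 1 := by
  rw [unifOn, sum_indicator_subset _ (subset_univ s), sum_const, nsmul_eq_mul,
    mul_inv_cancel₀ (by exact_mod_cast hs.card_pos.ne')]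

theorem eq_unifOn_of_sum_eq_one {p : Ω → ℝ} {s : Finset Ω} (hsum : ∑ x, p x = 1)
    (hout : ∀ x ∉ s, p x = 0) (hconst : ∀ x ∈ s, ∀ y ∈ s, p x = p y) : p = unifOn s := by
  have hsum_s : ∑ y ∈ s, p y = 1 := (sum_subset (subset_univ s) fun y _ => hout y).trans hsum
  funext x
  by_cases hx : x ∈ s
  · have hcard : (#s : ℝ) * p x = 1 := by
      rw [← hsum_s, ← nsmul_eq_mul, ← sum_const, sum_congr rfl fun y hy => hconst x hx y hy]
    rw [unifOn, Set.indicator_of_mem (mem_coe.2 hx), eq_inv_of_mul_eq_one_right hcard]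
  · rw [unifOn, Set.indicator_of_notMem (mem_coe.not.2 hx), hout x hx]

theorem sum_unif [Nonempty Ω] : ∑ x, unif Ω x = 1 := by
  simp only [unif]
  rw [sum_const, card_univ, nsmul_eq_mul,
    mul_inv_cancel₀ (by exact_mod_cast Fintype.card_ne_zero)]

theorem eq_unif_of_le_inv_card {p : Ω → ℝ} (hsum : ∑ x, p x = 1)
    (hle : ∀ x, p x ≤ (Fintype.card Ω : ℝ)⁻¹) : p = unif Ω := by
  have : Nonempty Ω := by
    rcases isEmpty_or_nonempty Ω with h | h
    · simp at hsum
    · exact h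
  have hsub : ∑ x, (unif Ω x - p x) = 0 := by rw [sum_sub_distrib, hsum, sum_unif, sub_self]
  funext x
  show p x = (Fintype.card Ω : ℝ)⁻¹
  linarith [(sum_eq_zero_iff_of_nonneg fun y _ => sub_nonneg.2 (hle y)).1 hsub x (mem_univ x)]

theorem one_sub_sum_le_statDist {p r : Ω → ℝ} {s : Finset Ω} (hp : ∑ x, p x = 1)
    (hout : ∀ x ∉ s, p x = 0) (hr : ∑ x, r x = 1) : 1 - ∑ x ∈ s, r x ≤ statDist p r := by
  classical
  have hp_s : ∑ x ∈ s, p x = 1 := (sum_subset (subset_univ s) fun x _ => hout x).trans hp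
  have hr_split : ∑ x ∈ s, r x + ∑ x ∈ sᶜ, r x = 1 := by rw [sum_add_sum_compl, hr]
  have h_on : ∑ x ∈ s, (p x - r x) ≤ ∑ x ∈ s, |p x - r x| :=
    sum_le_sum fun x _ => le_abs_self _
  have h_off : ∑ x ∈ sᶜ, r x ≤ ∑ x ∈ sᶜ, |p x - r x| :=
    sum_le_sum fun x hx => by rw [hout x (mem_compl.1 hx), zero_sub, abs_neg]; exact le_abs_self _
  rw [sum_sub_distrib, hp_s] at h_on
  rw [statDist, ← sum_add_sum_compl s]
  linarith

end Distributions

section Pushforward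

variable {Ω Γ : Type*} [Fintype Ω] [DecidableEq Γ]

theorem sum_pushforward [Fintype Γ] (f : Ω → Γ) (p : Ω → ℝ) :
    ∑ y, pushforward f p y = ∑ x, p x := by
  simp only [pushforward]
  rw [sum_comm]
  exact sum_congr rfl fun x _ => Fintype.sum_ite_eq _ _

theorem pushforward_eq_zero {f : Ω → Γ} {p : Ω → ℝ} {y : Γ} (h : ∀ x, f x = y → p x = 0) :
    pushforward f p y = 0 :=
  sum_eq_zero fun x _ => by split_ifs with hx <;> simp [h x, hx]

theorem pushforward_add_apply [AddGroup Ω] [AddGroup Γ] {𝓕 : Type*} [FunLike 𝓕 Ω Γ]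
    [AddMonoidHomClass 𝓕 Ω Γ] (f : 𝓕) {p : Ω → ℝ} {w : Ω} (hw : ∀ x, p (x + w) = p x)
    (y : Γ) : pushforward f p (y + f w) = pushforward f p y := by
  refine (Fintype.sum_equiv (Equiv.addRight w) _ _ fun x => ?_).symm
  simp only [Equiv.coe_addRight, map_add, add_left_inj, hw]

end Pushforward

section Affine

variable {R E E' : Type*} [Ring R] [AddCommGroup E] [Module R E] [AddCommGroup E'] [Module R E']

theorem unifOn_add_of_mem {W : Submodule R E} {a : E} {s : Finset E}
    (hs : ∀ u, u ∈ s ↔ u - a ∈ W) {w : E} (hw : w ∈ W) (x : E) :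
    unifOn s (x + w) = unifOn s x := by
  have hmem : x + w ∈ (s : Set E) ↔ x ∈ (s : Set E) := by
    rw [mem_coe, mem_coe, hs, hs, add_sub_right_comm, W.add_mem_iff_left hw]
  classical
  simp only [unifOn, Set.indicator, hmem]

theorem card_eq_natCard_of_mem_iff_sub_mem {W : Submodule R E} {a : E} {s : Finset E}
    (hs : ∀ u, u ∈ s ↔ u - a ∈ W) : #s = Nat.card W := by
  rw [← Nat.card_eq_finsetCard]
  exact Nat.card_congr
    { toFun u := ⟨u - a, (hs u).1 u.2⟩
      invFun w := ⟨w + a, (hs _).2 (by simp)⟩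
      left_inv u := by simp
      right_inv w := by simp }

variable [Fintype E] [Fintype E'] [DecidableEq E']

theorem pushforward_unifOn_coset (f : E →ₗ[R] E') {W : Submodule R E} {a : E} {s : Finset E}
    (hs : ∀ u, u ∈ s ↔ u - a ∈ W) {t : Finset E'} (ht : ∀ y, y ∈ t ↔ y - f a ∈ W.map f) :
    pushforward f (unifOn s) = unifOn t := by
  refine eq_unifOn_of_sum_eq_one ?_ (fun y hy => pushforward_eq_zero fun x hx => ?_)
    fun y hy y' hy' => ?_
  · rw [sum_pushforward, sum_unifOn ⟨a, (hs a).2 (by simp)⟩]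
  · have hxs : x ∉ s := fun hxs =>
      hy ((ht y).2 (hx ▸ map_sub f x a ▸ Submodule.mem_map_of_mem ((hs x).1 hxs)))
    rw [unifOn, Set.indicator_of_notMem (mem_coe.not.2 hxs)]
  · obtain ⟨w, hw, hfw⟩ : y - y' ∈ W.map f := by
      simpa using (W.map f).sub_mem ((ht y).1 hy) ((ht y').1 hy')
    rw [← add_sub_cancel y' y, ← hfw, pushforward_add_apply f (unifOn_add_of_mem hs hw)]

end Affine

section Threshold

variable {Ω : Type*} [Fintype Ω]

theorem minEntropyGe_natCast_mul_logb_iff {p : Ω → ℝ} {q : ℝ} (hq : 0 < q) (k : ℕ) :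
    minEntropyGe p (k * Real.logb 2 q) ↔ ∀ x, p x ≤ (q ^ k)⁻¹ := by
  rw [minEntropyGe, Real.rpow_neg zero_le_two, mul_comm, Real.rpow_mul zero_le_two,
    Real.rpow_logb zero_lt_two (by norm_num) hq, Real.rpow_natCast]

theorem le_of_statDist_lt_half {q : ℕ} (hq : 2 ≤ q) {p r : Ω → ℝ} {s : Finset Ω} {d t : ℕ}
    (hs : #s = q ^ d) (hp : ∑ x, p x = 1) (hout : ∀ x ∉ s, p x = 0) (hr : ∑ x, r x = 1)
    (hrle : ∀ x, r x ≤ ((q : ℝ) ^ t)⁻¹) (hdist : statDist p r < 1 / 2) : t ≤ d := by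
  by_contra! hdt
  have hq' : (2 : ℝ) ≤ q := by exact_mod_cast hq
  have hmass : ∑ x ∈ s, r x ≤ 1 / 2 := calc
    ∑ x ∈ s, r x ≤ ∑ x ∈ s, ((q : ℝ) ^ t)⁻¹ := sum_le_sum fun x _ => hrle x
    _ = (q : ℝ) ^ d / (q : ℝ) ^ t := by
      rw [sum_const, hs, nsmul_eq_mul, div_eq_mul_inv]; push_cast; ring
    _ ≤ (q : ℝ) ^ d / (q : ℝ) ^ (d + 1) := by gcongr; exacts [by linarith, hdt]
    _ = 1 / q := by rw [pow_succ]; field_simp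
    _ ≤ 1 / 2 := by gcongr
  linarith [one_sub_sum_le_statDist hp hout hr]

theorem unifOn_le_of_statDist_lt_half {q : ℕ} (hq : 2 ≤ q) {s : Finset Ω} {d t : ℕ}
    (hs : #s = q ^ d) {r : Ω → ℝ} (hr : ∑ x, r x = 1) (hrle : ∀ x, r x ≤ ((q : ℝ) ^ t)⁻¹)
    (hdist : statDist (unifOn s) r < 1 / 2) (x : Ω) : unifOn s x ≤ ((q : ℝ) ^ t)⁻¹ := by
  have hsum := sum_unifOn (s := s) (card_pos.1 (by rw [hs]; positivity))
  have hout : ∀ x ∉ s, unifOn s x = 0 := fun x hx => Set.indicator_of_notMem (mem_coe.not.2 hx) _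
  have htd := le_of_statDist_lt_half hq hs hsum hout hr hrle hdist
  calc unifOn s x ≤ (#s : ℝ)⁻¹ := unifOn_le_inv_card s x
    _ ≤ ((q : ℝ) ^ t)⁻¹ := by
      rw [hs]; push_cast; gcongr; exact_mod_cast (by omega : 1 ≤ q)

end Threshold

open Classical in
theorem stmt8_general {F : Type*} [Field F] [Fintype F] [DecidableEq F]
    (n m : ℕ) (W : Submodule F (Fin n → F))
    (a : Fin n → F) (f : (Fin n → F) →ₗ[F] (Fin m → F))
    (p : (Fin n → F) → ℝ)
    (hp : ∀ v, p v = if v - a ∈ W then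
        ((Finset.univ.filter (fun u : Fin n → F => u - a ∈ W)).card : ℝ)⁻¹ else 0)
    (ε : ℝ) (hε2 : ε < 1 / 2) :
    (statDist (pushforward f p) (unif (Fin m → F)) ≤ ε →
      pushforward f p = unif (Fin m → F)) ∧
    (∀ k' : ℕ,
      (∃ q : (Fin m → F) → ℝ, IsDist q ∧
        minEntropyGe q ((k' : ℝ) * Real.logb 2 (Fintype.card F)) ∧
        statDist (pushforward f p) q ≤ ε) →
      minEntropyGe (pushforward f p) ((k' : ℝ) * Real.logb 2 (Fintype.card F))) := by
  set q := Fintype.card F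
  set T := univ.filter fun u : Fin n → F => u - a ∈ W
  set S := univ.filter fun y : Fin m → F => y - f a ∈ W.map f
  have hT : ∀ u, u ∈ T ↔ u - a ∈ W := fun u => by simp only [T, mem_filter, mem_univ, true_and]
  have hS : ∀ y, y ∈ S ↔ y - f a ∈ W.map f := fun y => by
    simp only [S, mem_filter, mem_univ, true_and]
  have hpush : pushforward f p = unifOn S := by
    have hpT : p = unifOn T := funext fun v => by simp [hp, unifOn, Set.indicator_apply, T]
    exact hpT ▸ pushforward_unifOn_coset f hT hS
  have hcardS : #S = q ^ Module.finrank F (W.map f) := by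
    rw [card_eq_natCard_of_mem_iff_sub_mem hS, Module.natCard_eq_pow_finrank (K := F),
      Nat.card_eq_fintype_card]
  have hbound : ∀ (t : ℕ) (r : (Fin m → F) → ℝ), ∑ y, r y = 1 → (∀ y, r y ≤ ((q : ℝ) ^ t)⁻¹) →
      statDist (pushforward f p) r ≤ ε → ∀ y, pushforward f p y ≤ ((q : ℝ) ^ t)⁻¹ :=
    fun t r hr hrle hdist => hpush ▸ unifOn_le_of_statDist_lt_half Fintype.one_lt_card hcardS
      hr hrle (hpush ▸ hdist.trans_lt hε2)
  have hcard : (Fintype.card (Fin m → F) : ℝ) = (q : ℝ) ^ m := by simp [q]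
  refine ⟨fun hdist => eq_unif_of_le_inv_card ?_ ?_, ?_⟩
  · rw [hpush]; exact sum_unifOn ⟨f a, (hS _).2 (by simp)⟩
  · rw [hcard]
    exact hbound m _ sum_unif (fun _ => hcard ▸ le_rfl) hdist
  · rintro k' ⟨r, ⟨-, hr⟩, hrent, hdist⟩
    rw [minEntropyGe_natCast_mul_logb_iff (by positivity)] at hrent ⊢
    exact hbound k' r hr hrent hdist

open Classical in
/-- A linear map applied to an affine source attains either zero or
large error, both as a condenser to full entropy and to any given entropy. -/
theorem stmt8 {F : Type*} [Field F] [Fintype F] [DecidableEq F]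
    (n m k : ℕ) (W : Submodule F (Fin n → F)) (hW : Module.finrank F W = k)
    (a : Fin n → F) (f : (Fin n → F) →ₗ[F] (Fin m → F))
    (p : (Fin n → F) → ℝ)
    (hp : ∀ v, p v = if v - a ∈ W then
        ((Finset.univ.filter (fun u : Fin n → F => u - a ∈ W)).card : ℝ)⁻¹ else 0)
    (ε : ℝ) (hε : 0 ≤ ε) (hε2 : ε < 1 / 2) :
    (statDist (pushforward f p) (unif (Fin m → F)) ≤ ε →
      pushforward f p = unif (Fin m → F)) ∧
    (∀ k' : ℕ,
      (∃ q : (Fin m → F) → ℝ, IsDist q ∧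
        minEntropyGe q ((k' : ℝ) * Real.logb 2 (Fintype.card F)) ∧
        statDist (pushforward f p) q ≤ ε) →
      minEntropyGe (pushforward f p) ((k' : ℝ) * Real.logb 2 (Fintype.card F))) :=
  stmt8_general n m W a f p hp ε hε2
end

section
/- Let M be an m×n Boolean matrix that is (d, e)-disjunct, where d+1 ≤ n. Then for every pair of distinct d-sparse vectors x, x' ∈ {0,1}^n such that supp(x) is not contained in supp(x'), we have |supp(M[x]) \ supp(M[x'])| > e. Conversely, if an m×n Boolean matrix M satisfies |supp(M[x]) \ supp(M[x'])| > e for every pair of distinct d-sparse vectors x, x' with supp(x) not contained in supp(x'), then M is (d−1, e)-disjunct. -/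
/-- Support of a Boolean vector. -/
def suppB {ι : Type*} [Fintype ι] (x : ι → Bool) : Finset ι :=
  Finset.univ.filter (fun i => x i = true)

/-- The measurement outcome `M[x]`: bitwise OR of the columns of `M` picked by `supp x`. -/
def orMeasure {ρ ι : Type*} [Fintype ι] (M : ρ → ι → Bool) (x : ι → Bool) : ρ → Bool :=
  fun i => decide (∃ j, M i j = true ∧ x j = true)

/-- `(d, e)`-disjunct matrix. -/
def Disjunct {m n : ℕ} (M : Fin m → Fin n → Bool) (d e : ℕ) : Prop :=
  ∀ (j₀ : Fin n) (T : Finset (Fin n)), T.card = d → j₀ ∉ T →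
    e < ((suppB fun i => M i j₀) \ T.biUnion (fun j => suppB fun i => M i j)).card

lemma supp_orMeasure {m n : ℕ} (M : Fin m → Fin n → Bool) (x : Fin n → Bool) :
    suppB (orMeasure M x) = (suppB x).biUnion (fun j => suppB fun i => M i j) := by
  ext i
  simp only [suppB, orMeasure, Finset.mem_filter, Finset.mem_biUnion, Finset.mem_univ,
    true_and, decide_eq_true_eq]
  tauto

/-- Disjunct matrices distinguish sparse vectors, and conversely. -/
theorem stmt9 {m n : ℕ} (M : Fin m → Fin n → Bool) (d e : ℕ) (hn : d + 1 ≤ n) :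
    (Disjunct M d e →
      ∀ x x' : Fin n → Bool, x ≠ x' → (suppB x).card ≤ d → (suppB x').card ≤ d →
        ¬ suppB x ⊆ suppB x' →
        e < (suppB (orMeasure M x) \ suppB (orMeasure M x')).card) ∧
    (1 ≤ d →
      (∀ x x' : Fin n → Bool, x ≠ x' → (suppB x).card ≤ d → (suppB x').card ≤ d →
        ¬ suppB x ⊆ suppB x' →
        e < (suppB (orMeasure M x) \ suppB (orMeasure M x')).card) →
      Disjunct M (d - 1) e) := by
  constructor
  · intro hdisj x x' _ hx hx' hsub
    obtain ⟨j₀, hj₀x, hj₀x'⟩ := Finset.not_subset.mp hsub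
    have hsubU : suppB x' ⊆ Finset.univ.erase j₀ := by
      intro j hj
      exact Finset.mem_erase.mpr ⟨fun h => hj₀x' (h ▸ hj), Finset.mem_univ j⟩
    obtain ⟨T, hT1, hT2, hTcard⟩ := Finset.exists_subsuperset_card_eq hsubU hx'
      (by simpa [Finset.card_erase_of_mem, Finset.card_univ] using Nat.le_sub_one_of_lt hn)
    have hj₀T : j₀ ∉ T := fun h => (Finset.mem_erase.mp (hT2 h)).1 rfl
    refine lt_of_lt_of_le (hdisj j₀ T hTcard hj₀T) (Finset.card_le_card ?_)
    intro i hi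
    rw [Finset.mem_sdiff] at hi
    rw [Finset.mem_sdiff, supp_orMeasure, supp_orMeasure]
    constructor
    · exact Finset.mem_biUnion.mpr ⟨j₀, hj₀x, hi.1⟩
    · intro h
      obtain ⟨j, hj, hij⟩ := Finset.mem_biUnion.mp h
      exact hi.2 (Finset.mem_biUnion.mpr ⟨j, hT1 hj, hij⟩)
  · intro hd hprop j₀ T hTcard hj₀T
    set x : Fin n → Bool := fun j => decide (j ∈ insert j₀ T) with hxdef
    set x' : Fin n → Bool := fun j => decide (j ∈ T) with hx'def
    have hsx : suppB x = insert j₀ T := by ext j; simp [suppB, hxdef]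
    have hsx' : suppB x' = T := by ext j; simp [suppB, hx'def]
    have hcard : (insert j₀ T).card = d := by
      rw [Finset.card_insert_of_notMem hj₀T, hTcard]
      omega
    have hne : x ≠ x' := by
      intro h
      have := congrFun h j₀
      simp [hxdef, hx'def, hj₀T] at this
    have hns : ¬ suppB x ⊆ suppB x' := by
      rw [hsx, hsx']
      intro h
      exact hj₀T (h (Finset.mem_insert_self j₀ T))
    have := hprop x x' hne (by rw [hsx, hcard]) (by rw [hsx', hTcard]; omega) hns
    refine lt_of_lt_of_le this (le_of_eq ?_)
    congr 1
    rw [supp_orMeasure, supp_orMeasure, hsx, hsx']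
    ext i
    simp only [Finset.mem_sdiff, Finset.mem_biUnion, Finset.mem_insert]
    constructor
    · rintro ⟨⟨j, hj | hj, hij⟩, h2⟩
      · exact ⟨hj ▸ hij, h2⟩
      · exact absurd ⟨j, hj, hij⟩ h2
    · rintro ⟨h1, h2⟩
      exact ⟨⟨j₀, Or.inl rfl, h1⟩, h2⟩
end

section
/- Let f : {0,1}^ñ × {0,1}^t → {0,1}^ℓ̃ be a strong k →_ε k' condenser, let Σ := {0,1}^ℓ̃, and let C ⊆ Σ^{2^t} be the code induced by f. Then for every mixture S over Σ^{2^t}, |LIST_C(S, ρ(S)·2^{ℓ̃−k'} + ε)| < 2^k. -/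
/-- Joint distribution of `(Z, f(X, Z))` where `X ∼ p` and `Z` is uniform. -/
noncomputable def jointDist {A S B : Type*} [Fintype A] [Fintype S] [DecidableEq B]
    (p : A → ℝ) (f : A → S → B) : S × B → ℝ :=
  fun sb => (Fintype.card S : ℝ)⁻¹ * ∑ x, if f x sb.1 = sb.2 then p x else 0

/-- Strong `k →_ε k'` condenser. -/
def IsStrongCondenser {A S B : Type*} [Fintype A] [Fintype S] [Fintype B] [DecidableEq B]
    (f : A → S → B) (k k' ε : ℝ) : Prop :=
  ∀ p : A → ℝ, IsDist p → minEntropyGe p k →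
    ∃ q : S × B → ℝ, IsDist q ∧
      minEntropyGe q (Real.logb 2 (Fintype.card S) + k') ∧
      statDist (jointDist p f) q ≤ ε

/-- `ρ(S)`: expected agreement of a uniformly random word with the mixture `S`. -/
noncomputable def rhoMix {t ℓt : ℕ} (S : (Fin t → Bool) → Finset (Fin ℓt → Bool)) : ℝ :=
  (∑ y, ((S y).card : ℝ)) / ((2 : ℝ) ^ t * (2 : ℝ) ^ ℓt)

/-! If `2 ^ k` messages `x` had codewords agreeing with `S` on more than an
`α := ρ(S) 2 ^ (ℓ̃ - k') + ε` fraction of seeds, then for `X` uniform on them, which has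
min-entropy `k`, the event `f(X, Z) ∈ S_Z` would have probability greater than `α`. But
`(Z, f(X, Z))` is `ε`-close to a distribution of min-entropy `t + k'`, which gives that event,
of size `∑ |S_z| = ρ(S) 2 ^ (t + ℓ̃)`, probability at most `ρ(S) 2 ^ (ℓ̃ - k')`. -/

open scoped Finset

section Distributions

variable {Ω : Type*} [Fintype Ω]

theorem sum_sub_sum_le_statDist {p q : Ω → ℝ} (hp : ∑ x, p x = 1) (hq : ∑ x, q x = 1)
    (s : Finset Ω) : ∑ x ∈ s, p x - ∑ x ∈ s, q x ≤ statDist p q := by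
  classical
  have hcompl : ∑ x ∈ sᶜ, (p x - q x) = -∑ x ∈ s, (p x - q x) := by
    have htotal : ∑ x, (p x - q x) = 0 := by rw [Finset.sum_sub_distrib, hp, hq, sub_self]
    linarith [Finset.sum_add_sum_compl s (fun x => p x - q x)]
  have hs : ∑ x ∈ s, (p x - q x) ≤ ∑ x ∈ s, |p x - q x| :=
    Finset.sum_le_sum fun x _ => le_abs_self _
  have hsc : -∑ x ∈ sᶜ, (p x - q x) ≤ ∑ x ∈ sᶜ, |p x - q x| := by
    rw [← Finset.sum_neg_distrib]
    exact Finset.sum_le_sum fun x _ => neg_le_abs _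
  rw [statDist, ← Finset.sum_add_sum_compl s, ← Finset.sum_sub_distrib]
  linarith

theorem sum_le_card_mul_of_minEntropyGe {q : Ω → ℝ} {b : ℝ} (hq : minEntropyGe q b)
    (s : Finset Ω) : ∑ x ∈ s, q x ≤ #s * (2 : ℝ) ^ (-b) := by
  simpa using Finset.sum_le_sum fun x (_ : x ∈ s) => hq x

variable [DecidableEq Ω]

noncomputable def uniformOn (T : Finset Ω) (x : Ω) : ℝ :=
  if x ∈ T then (#T : ℝ)⁻¹ else 0

theorem isDist_uniformOn {T : Finset Ω} (hT : T.Nonempty) : IsDist (uniformOn T) := by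
  refine ⟨fun x => by unfold uniformOn; split_ifs <;> positivity, ?_⟩
  simp only [uniformOn, Finset.sum_ite_mem, Finset.univ_inter, Finset.sum_const, nsmul_eq_mul]
  exact mul_inv_cancel₀ (by exact_mod_cast hT.card_pos.ne')

theorem minEntropyGe_uniformOn {T : Finset Ω} {b : ℝ} (hT : (2 : ℝ) ^ b ≤ #T) :
    minEntropyGe (uniformOn T) b := by
  intro x
  unfold uniformOn
  split_ifs
  · rw [Real.rpow_neg zero_le_two]
    exact inv_anti₀ (by positivity) hT
  · positivity

theorem sum_uniformOn_mul (T : Finset Ω) (g : Ω → ℝ) :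
    ∑ x, uniformOn T x * g x = (#T : ℝ)⁻¹ * ∑ x ∈ T, g x := by
  simp only [uniformOn, ite_mul, zero_mul, Finset.sum_ite_mem, Finset.univ_inter,
    Finset.mul_sum]

end Distributions

section Condenser

variable {A S B : Type*} [Fintype A] [Fintype S] [DecidableEq S] [DecidableEq B]

theorem sum_jointDist (p : A → ℝ) (f : A → S → B) (E : Finset (S × B)) :
    ∑ zb ∈ E, jointDist p f zb =
      (Fintype.card S : ℝ)⁻¹ * ∑ x, p x * #{z | (z, f x z) ∈ E} := by
  have hgraph : ∀ x, #{zb ∈ E | f x zb.1 = zb.2} = #{z | (z, f x z) ∈ E} := fun x =>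
    Finset.card_bij' (fun zb _ => zb.1) (fun z _ => (z, f x z))
      (by rintro ⟨z, b⟩ h; simp_all) (by simp +contextual)
      (by rintro ⟨z, b⟩ h; simp_all) (by simp)
  simp only [jointDist, ← Finset.mul_sum]
  rw [Finset.sum_comm]
  congr 1
  refine Finset.sum_congr rfl fun x _ => ?_
  rw [← Finset.sum_filter, Finset.sum_const, nsmul_eq_mul, hgraph, mul_comm]

variable [Fintype B]

theorem sum_jointDist_eq_one [Nonempty S] {p : A → ℝ} (hp : ∑ x, p x = 1) (f : A → S → B) :
    ∑ zb, jointDist p f zb = 1 := by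
  have hS : (Fintype.card S : ℝ) ≠ 0 := by positivity
  simp [sum_jointDist, ← Finset.sum_mul, hp, hS]

variable {f : A → S → B} {k k' ε : ℝ}

theorem IsStrongCondenser.sum_jointDist_le [Nonempty S] (hf : IsStrongCondenser f k k' ε)
    {p : A → ℝ} (hp : IsDist p) (hpk : minEntropyGe p k) (E : Finset (S × B)) :
    ∑ zb ∈ E, jointDist p f zb ≤ #E * (2 : ℝ) ^ (-k') / Fintype.card S + ε := by
  obtain ⟨q, hq, hqk, hpq⟩ := hf p hp hpk
  have hS : (0 : ℝ) < Fintype.card S := by positivity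
  have hmass : (2 : ℝ) ^ (-(Real.logb 2 (Fintype.card S) + k')) =
      (2 : ℝ) ^ (-k') / Fintype.card S := by
    rw [neg_add, Real.rpow_add zero_lt_two, Real.rpow_neg zero_le_two,
      Real.rpow_logb zero_lt_two (by norm_num) hS, inv_mul_eq_div]
  have hqE := sum_le_card_mul_of_minEntropyGe hqk E
  have hdist := sum_sub_sum_le_statDist (sum_jointDist_eq_one hp.2 f) hq.2 E
  rw [hmass, ← mul_div_assoc] at hqE
  linarith

theorem IsStrongCondenser.card_filter_lt [Nonempty S] (hf : IsStrongCondenser f k k' ε)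
    (E : Finset (S × B)) :
    (#{x | (#E * (2 : ℝ) ^ (-k') / Fintype.card S + ε) * Fintype.card S <
      #{z | (z, f x z) ∈ E}} : ℝ) < 2 ^ k := by
  classical
  set θ := #E * (2 : ℝ) ^ (-k') / Fintype.card S + ε
  set T : Finset A := {x | θ * Fintype.card S < #{z | (z, f x z) ∈ E}}
  by_contra! hT
  have hTpos : (0 : ℝ) < #T := (Real.rpow_pos_of_pos zero_lt_two k).trans_le hT
  have hTne : T.Nonempty := Finset.card_pos.mp (by exact_mod_cast hTpos)
  have hlarge : θ * Fintype.card S * #T < ∑ x ∈ T, (#{z | (z, f x z) ∈ E} : ℝ) := by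
    simpa [mul_comm] using
      Finset.sum_lt_sum_of_nonempty hTne fun x hx => (Finset.mem_filter.mp hx).2
  have hjoint : θ < ∑ zb ∈ E, jointDist (uniformOn T) f zb := by
    rw [sum_jointDist, sum_uniformOn_mul, ← mul_assoc, ← mul_inv, lt_inv_mul_iff₀ (by positivity)]
    linarith
  have := hf.sum_jointDist_le (isDist_uniformOn hTne) (minEntropyGe_uniformOn hT) E
  linarith

end Condenser

theorem card_filter_snd_mem {S B : Type*} [Fintype S] [Fintype B] [DecidableEq B]
    (M : S → Finset B) : #{zb : S × B | zb.2 ∈ M zb.1} = ∑ z, #(M z) := by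
  rw [Finset.card_filter, Fintype.sum_prod_type]
  simp only [Finset.sum_ite_mem, Finset.univ_inter, Finset.sum_const, smul_eq_mul, mul_one]

open Classical in
theorem stmt10_general (nt t ℓt : ℕ)
    (f : (Fin nt → Bool) → (Fin t → Bool) → Fin ℓt → Bool)
    (k k' ε : ℝ) (hf : IsStrongCondenser f k k' ε)
    (S : (Fin t → Bool) → Finset (Fin ℓt → Bool)) :
    (((Finset.univ.image (fun x : Fin nt → Bool => fun y => f x y)).filter
        (fun c : (Fin t → Bool) → Fin ℓt → Bool =>
          (rhoMix S * (2 : ℝ) ^ ((ℓt : ℝ) - k') + ε) * 2 ^ t <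
            ((Finset.univ.filter (fun y => c y ∈ S y)).card : ℝ))).card : ℝ) <
      (2 : ℝ) ^ k := by
  set E : Finset ((Fin t → Bool) × (Fin ℓt → Bool)) := {zb | zb.2 ∈ S zb.1}
  have hthreshold : (#E * (2 : ℝ) ^ (-k') / Fintype.card (Fin t → Bool) + ε) *
      Fintype.card (Fin t → Bool) = (rhoMix S * (2 : ℝ) ^ ((ℓt : ℝ) - k') + ε) * 2 ^ t := by
    have hcard : (Fintype.card (Fin t → Bool) : ℝ) = 2 ^ t := by simp
    rw [card_filter_snd_mem, rhoMix, hcard, Real.rpow_sub zero_lt_two, Real.rpow_neg zero_le_two,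
      Real.rpow_natCast]
    push_cast
    field_simp
  refine lt_of_le_of_lt ?_ (hf.card_filter_lt E)
  rw [Finset.filter_image, hthreshold]
  exact_mod_cast Finset.card_image_le.trans_eq (by congr; simp [E])

open Classical in
/-- Agreement list-size bound for codes induced by strong condensers. -/
theorem stmt10 (nt t ℓt : ℕ)
    (f : (Fin nt → Bool) → (Fin t → Bool) → Fin ℓt → Bool)
    (k k' ε : ℝ) (hf : IsStrongCondenser f k k' ε)
    (S : (Fin t → Bool) → Finset (Fin ℓt → Bool)) (hS : ∀ y, (S y).Nonempty) :
    (((Finset.univ.image (fun x : Fin nt → Bool => fun y => f x y)).filter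
        (fun c : (Fin t → Bool) → Fin ℓt → Bool =>
          (rhoMix S * (2 : ℝ) ^ ((ℓt : ℝ) - k') + ε) * 2 ^ t <
            ((Finset.univ.filter (fun y => c y ∈ S y)).card : ℝ))).card : ℝ) <
      (2 : ℝ) ^ k :=
  stmt10_general nt t ℓt f k k' ε hf S
end

section
/- Suppose an m×n Boolean measurement matrix M, with n ≥ d, is (e0, e1, e'0, e'1)-resilient for d-sparse vectors. Then (max{e0, e1} + 1)·⌊d/(e'0 + e'1 + 1)⌋ ≤ m. -/
/-- The ordered pair `(x, y)` is `(e0, e1)`-close. -/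
def ClosePair {ι : Type*} [Fintype ι] [DecidableEq ι] (e0 e1 : ℕ) (x y : ι → Bool) : Prop :=
  (suppB y \ suppB x).card ≤ e0 ∧ (suppB x \ suppB y).card ≤ e1

/-- `(e0, e1, e0', e1')`-resilient measurement matrix for `d`-sparse vectors. -/
def Resilient {ρ ι : Type*} [Fintype ρ] [DecidableEq ρ] [Fintype ι] [DecidableEq ι]
    (M : ρ → ι → Bool) (d e0 e1 e0' e1' : ℕ) : Prop :=
  ∀ y : ρ → Bool, ∃ z : ι → Bool, ∀ x : ι → Bool, (suppB x).card ≤ d →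
    ¬ ClosePair e0' e1' x z → ¬ ClosePair e0 e1 (orMeasure M x) y

open Finset

@[simp]
lemma mem_suppB {ι : Type*} [Fintype ι] {x : ι → Bool} {i : ι} : i ∈ suppB x ↔ x i = true := by
  simp [suppB]

lemma suppB_decide_mem {ι : Type*} [Fintype ι] [DecidableEq ι] (s : Finset ι) :
    suppB (fun i => decide (i ∈ s)) = s := by
  ext
  simp

lemma suppB_orMeasure_mono {ρ ι : Type*} [Fintype ρ] [Fintype ι] (M : ρ → ι → Bool)
    {x x' : ι → Bool} (h : suppB x ⊆ suppB x') :
    suppB (orMeasure M x) ⊆ suppB (orMeasure M x') := by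
  intro r
  simp only [mem_suppB, orMeasure, decide_eq_true_eq]
  rintro ⟨j, hMj, hxj⟩
  exact ⟨j, hMj, mem_suppB.1 (h (mem_suppB.2 hxj))⟩

section ClosePair

variable {ι : Type*} [Fintype ι] [DecidableEq ι]

lemma exists_closePair_of_subset {e0 e1 : ℕ} {u v : ι → Bool} (huv : suppB u ⊆ suppB v)
    (h : #(suppB v \ suppB u) ≤ max e0 e1) :
    ∃ y, ClosePair e0 e1 u y ∧ ClosePair e0 e1 v y := by
  obtain ⟨D, hD, hDcard⟩ := exists_subset_card_eq (min_le_left #(suppB v \ suppB u) e0)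
  refine ⟨fun i => decide (i ∈ suppB u ∪ D), ?_⟩
  rw [ClosePair, ClosePair, suppB_decide_mem]
  have hDv : D ⊆ suppB v := hD.trans sdiff_subset
  have hvD : suppB v \ (suppB u ∪ D) = (suppB v \ suppB u) \ D := by grind
  refine ⟨⟨?_, by simp [sdiff_eq_empty_iff_subset.2 subset_union_left]⟩,
    ⟨by simp [sdiff_eq_empty_iff_subset.2 (union_subset huv hDv)], ?_⟩⟩
  · calc #((suppB u ∪ D) \ suppB u) ≤ #D := card_le_card (by grind)
      _ ≤ e0 := hDcard ▸ min_le_right _ _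
  · rw [hvD, card_sdiff_of_subset hD, hDcard]
    omega

lemma ClosePair.card_sdiff_le {a b : ℕ} {x x' z : ι → Bool} (h : ClosePair a b x z)
    (h' : ClosePair a b x' z) : #(suppB x' \ suppB x) ≤ a + b :=
  calc #(suppB x' \ suppB x) ≤ #(suppB x' \ suppB z ∪ suppB z \ suppB x) :=
        card_le_card (sdiff_triangle _ _ _)
    _ ≤ #(suppB x' \ suppB z) + #(suppB z \ suppB x) := card_union_le _ _
    _ ≤ a + b := by linarith [h.1, h'.2]

end ClosePair

lemma exists_lt_add_of_lt_mul {w : ℕ → ℕ} {c t m : ℕ} (hwt : w t ≤ m) (hm : m < c * t) :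
    ∃ i < t, w (i + 1) < w i + c := by
  by_contra! hgap
  have hgrowth : ∀ i ≤ t, c * i ≤ w i := by
    intro i hi
    induction i with
    | zero => simp
    | succ i ih =>
      have := hgap i hi
      have := ih (by omega)
      rw [Nat.mul_succ]
      omega
  have := hgrowth t le_rfl
  omega

namespace Resilient

variable {ρ ι : Type*} [Fintype ρ] [DecidableEq ρ] [Fintype ι] [DecidableEq ι]
  {M : ρ → ι → Bool} {d e0 e1 e0' e1' : ℕ}

lemma card_sdiff_le (hres : Resilient M d e0 e1 e0' e1') {u v : ι → Bool}
    (hu : #(suppB u) ≤ d) (hv : #(suppB v) ≤ d) (huv : suppB u ⊆ suppB v)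
    (hM : #(suppB (orMeasure M v) \ suppB (orMeasure M u)) ≤ max e0 e1) :
    #(suppB v \ suppB u) ≤ e0' + e1' := by
  obtain ⟨y, hyu, hyv⟩ := exists_closePair_of_subset (suppB_orMeasure_mono M huv) hM
  obtain ⟨z, hz⟩ := hres y
  have hzu : ClosePair e0' e1' u z := not_not.1 fun h => hz u hu h hyu
  have hzv : ClosePair e0' e1' v z := not_not.1 fun h => hz v hv h hyv
  exact hzu.card_sdiff_le hzv

lemma mul_le_card_of_chain (hres : Resilient M d e0 e1 e0' e1') (x : ℕ → ι → Bool) (t : ℕ)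
    (hsparse : ∀ i ≤ t, #(suppB (x i)) ≤ d)
    (hmono : ∀ i < t, suppB (x i) ⊆ suppB (x (i + 1)))
    (hstep : ∀ i < t, e0' + e1' < #(suppB (x (i + 1)) \ suppB (x i))) :
    (max e0 e1 + 1) * t ≤ Fintype.card ρ := by
  by_contra! hlt
  obtain ⟨i, hit, hgap⟩ := exists_lt_add_of_lt_mul (w := fun i => #(suppB (orMeasure M (x i))))
    (card_le_univ _) hlt
  have hMsub := suppB_orMeasure_mono M (hmono i hit)
  have hM : #(suppB (orMeasure M (x (i + 1))) \ suppB (orMeasure M (x i))) ≤ max e0 e1 := by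
    rw [card_sdiff_of_subset hMsub]
    omega
  exact (hstep i hit).not_ge
    (hres.card_sdiff_le (hsparse i hit.le) (hsparse (i + 1) hit) (hmono i hit) hM)

end Resilient

def prefixVec (n a : ℕ) : Fin n → Bool := fun j => decide ((j : ℕ) < a)

lemma suppB_prefixVec (n a : ℕ) :
    suppB (prefixVec n a) = ({j | (j : ℕ) < a} : Finset (Fin n)) := by
  ext
  simp [prefixVec]

lemma card_suppB_prefixVec {n a : ℕ} (h : a ≤ n) : #(suppB (prefixVec n a)) = a := by
  rw [suppB_prefixVec, Fin.card_filter_val_lt]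
  omega

lemma suppB_prefixVec_mono (n : ℕ) {a b : ℕ} (h : a ≤ b) :
    suppB (prefixVec n a) ⊆ suppB (prefixVec n b) := by
  rw [suppB_prefixVec, suppB_prefixVec]
  exact monotone_filter_right _ fun _ _ hj => hj.trans_le h

/-- Trade-off between noise tolerance and reconstruction ambiguity. -/
theorem stmt12 {m n : ℕ} (M : Fin m → Fin n → Bool) (d e0 e1 e0' e1' : ℕ)
    (hdn : d ≤ n) (hres : Resilient M d e0 e1 e0' e1') :
    (max e0 e1 + 1) * (d / (e0' + e1' + 1)) ≤ m := by
  set k := e0' + e1' + 1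
  have hkd {i : ℕ} (hi : i ≤ d / k) : i * k ≤ d :=
    (Nat.mul_le_mul_right k hi).trans (Nat.div_mul_le_self d k)
  have hcard {i : ℕ} (hi : i ≤ d / k) : #(suppB (prefixVec n (i * k))) = i * k :=
    card_suppB_prefixVec ((hkd hi).trans hdn)
  simpa using hres.mul_le_card_of_chain (fun i => prefixVec n (i * k)) (d / k)
    (fun i hi => (hcard hi).trans_le (hkd hi))
    (fun i _ => suppB_prefixVec_mono n (Nat.mul_le_mul_right k i.le_succ))
    (fun i hi => calc
      e0' + e1' < (i + 1) * k - i * k := by rw [add_one_mul, Nat.add_sub_cancel_left]; omega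
      _ = #(suppB (prefixVec n ((i + 1) * k))) - #(suppB (prefixVec n (i * k))) := by
        rw [hcard hi, hcard hi.le]
      _ ≤ _ := le_card_sdiff _ _)
end

section
/- Let c > 1 be an integer and H = (V, E) a c-hypergraph (every hyperedge is a subset of V of size exactly c) with |V| ≥ c and density at least ε > 0, i.e., |E| ≥ ε·binom(|V|, c). Then H has a matching (a set of pairwise disjoint hyperedges) of size at least (ε/c²)·(|V| − c + 1). -/
/-!
Take a maximal matching `M`. By maximality every edge meets one of the at most `c |M|` vertices
covered by `M`, and a vertex lies in at most `binom(n - 1, c - 1) = (c / n) binom(n, c)` edges, so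
`ε binom(n, c) ≤ |E| ≤ c |M| (c / n) binom(n, c)`, i.e. `ε n ≤ c² |M|`.
-/

open Finset

theorem Nat.mul_choose_sub_one {k : ℕ} (hk : 0 < k) (n : ℕ) :
    n * (n - 1).choose (k - 1) = n.choose k * k := by
  obtain ⟨k, rfl⟩ := Nat.exists_eq_add_one_of_ne_zero hk.ne'
  rcases n with _ | n
  · simp
  · simpa using Nat.add_one_mul_choose_eq n k

namespace Finset

variable {V : Type*}

theorem exists_pairwise_disjoint_subset_forall_not_disjoint (E : Finset (Finset V))
    (hE : ∀ e ∈ E, e.Nonempty) :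
    ∃ M ⊆ E, (M : Set (Finset V)).Pairwise Disjoint ∧ ∀ e ∈ E, ∃ m ∈ M, ¬Disjoint e m := by
  classical
  obtain ⟨M, hM, hmax⟩ := (E.powerset.filter fun M : Finset (Finset V) ↦
    (M : Set (Finset V)).Pairwise Disjoint).exists_maximal ⟨∅, by simp⟩
  simp only [mem_filter, mem_powerset] at hM hmax
  refine ⟨M, hM.1, hM.2, fun e he ↦ ?_⟩
  by_contra! hdisj
  have hinsert : (insert e M : Set (Finset V)).Pairwise Disjoint :=
    hM.2.insert fun m hm _ ↦ ⟨hdisj m hm, (hdisj m hm).symm⟩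
  have heM : e ∈ M :=
    hmax ⟨insert_subset he hM.1, by rwa [coe_insert]⟩ (subset_insert e M) (mem_insert_self e M)
  exact (hE e he).ne_empty (disjoint_self.1 (hdisj e heM))

theorem card_filter_mem_le_choose [Fintype V] [DecidableEq V] {E : Finset (Finset V)} {c : ℕ}
    (hE : ∀ e ∈ E, #e = c) (v : V) :
    #{e ∈ E | v ∈ e} ≤ (Fintype.card V - 1).choose (c - 1) := by
  calc #{e ∈ E | v ∈ e} ≤ #(((univ.erase v).powersetCard (c - 1)).image (insert v)) := by
        refine card_le_card fun e he ↦ ?_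
        rw [mem_filter] at he
        refine mem_image.2 ⟨e.erase v, mem_powersetCard.2 ⟨?_, ?_⟩, insert_erase he.2⟩
        · exact erase_subset_erase v (subset_univ e)
        · rw [card_erase_of_mem he.2, hE e he.1]
    _ ≤ (Fintype.card V - 1).choose (c - 1) := by
        refine card_image_le.trans_eq ?_
        rw [card_powersetCard, card_erase_of_mem (mem_univ v), card_univ]

theorem card_le_card_mul_of_forall_not_disjoint [DecidableEq V] {E : Finset (Finset V)}
    {S : Finset V} {d : ℕ} (hS : ∀ e ∈ E, ¬Disjoint e S) (hd : ∀ v ∈ S, #{e ∈ E | v ∈ e} ≤ d) :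
    #E ≤ #S * d := by
  simpa using card_mul_le_card_mul (fun e v ↦ v ∈ e) (m := 1)
    (fun e he ↦ by simpa [bipartiteAbove, card_pos, filter_mem_eq_inter, inter_comm,
      ← not_disjoint_iff_nonempty_inter] using fun h ↦ hS e he h.symm)
    (fun v hv ↦ hd v hv)

theorem card_mul_le_sq_mul_card_mul_choose [Fintype V] [DecidableEq V] {E M : Finset (Finset V)}
    {c : ℕ} (hc : 0 < c) (hE : ∀ e ∈ E, #e = c) (hM : ∀ m ∈ M, #m ≤ c)
    (hmeet : ∀ e ∈ E, ∃ m ∈ M, ¬Disjoint e m) :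
    #E * Fintype.card V ≤ c ^ 2 * #M * (Fintype.card V).choose c := by
  set n := Fintype.card V
  have hcover : ∀ e ∈ E, ¬Disjoint e (M.biUnion id) := fun e he ↦ by
    obtain ⟨m, hm, hem⟩ := hmeet e he
    exact fun h ↦ hem (h.mono_right (subset_biUnion_of_mem id hm))
  have hE_le : #E ≤ #M * c * (n - 1).choose (c - 1) :=
    (card_le_card_mul_of_forall_not_disjoint hcover fun v _ ↦ card_filter_mem_le_choose hE v).trans
      (Nat.mul_le_mul_right _ (card_biUnion_le_card_mul M id c hM))
  calc #E * n ≤ #M * c * ((n - 1).choose (c - 1) * n) := by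
        rw [← mul_assoc]; exact Nat.mul_le_mul_right n hE_le
    _ = c ^ 2 * #M * n.choose c := by
        rw [mul_comm _ n, Nat.mul_choose_sub_one hc]; ring

end Finset

/-- Every dense `c`-hypergraph has a large matching. -/
theorem stmt13 {V : Type*} [Fintype V] [DecidableEq V] (c : ℕ) (hc : 1 < c)
    (hcV : c ≤ Fintype.card V)
    (E : Finset (Finset V)) (hE : ∀ e ∈ E, e.card = c)
    (ε : ℝ) (hε : 0 < ε)
    (hdens : ε * ((Fintype.card V).choose c : ℝ) ≤ (E.card : ℝ)) :
    ∃ M ⊆ E, (∀ a ∈ M, ∀ b ∈ M, a ≠ b → Disjoint a b) ∧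
      ε / (c : ℝ) ^ 2 * ((Fintype.card V : ℝ) - (c : ℝ) + 1) ≤ (M.card : ℝ) := by
  set n := Fintype.card V
  obtain ⟨M, hME, hM, hmeet⟩ := exists_pairwise_disjoint_subset_forall_not_disjoint E
    fun e he ↦ card_pos.1 (by rw [hE e he]; omega)
  refine ⟨M, hME, fun a ha b hb hab ↦ hM ha hb hab, ?_⟩
  have hcount : (#E * n : ℝ) ≤ c ^ 2 * #M * n.choose c := by
    exact_mod_cast card_mul_le_sq_mul_card_mul_choose (by omega) hE
      (fun m hm ↦ (hE m (hME hm)).le) hmeet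
  have hchoose : (0 : ℝ) < n.choose c := by exact_mod_cast Nat.choose_pos hcV
  have hεn : ε * n ≤ c ^ 2 * #M := by
    refine le_of_mul_le_mul_right ?_ hchoose
    calc ε * n * n.choose c = ε * n.choose c * n := by ring
      _ ≤ #E * n := by gcongr
      _ ≤ c ^ 2 * #M * n.choose c := hcount
  have hc1 : (1 : ℝ) ≤ c := by exact_mod_cast hc.le
  calc ε / (c : ℝ) ^ 2 * ((n : ℝ) - c + 1) ≤ ε / (c : ℝ) ^ 2 * n := by gcongr; linarith
    _ ≤ (#M : ℝ) := by rw [div_mul_eq_mul_div, div_le_iff₀ (by positivity)]; linarith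
end

section
/- Suppose an m×n Boolean measurement matrix M is (e0, e1, e'0, e'1)-resilient for d-sparse vectors, where e'1 + 1 ≤ d ≤ n. Then for every ε > 0, either e1 < (e'1 + 1)·m/(ε·d) or e'0 ≥ (1 − ε)·(n − d + 1)/(e'1 + 1)². -/
open Finset

section Greedy

variable {ι ρ : Type*} [DecidableEq ρ]

lemma exists_greedy_biUnion [DecidableEq ι] (f : ι → Finset ρ) (L c : ℕ) :
    ∃ S : Finset ι, #S ≤ c ∧ (L + 1) * #S ≤ #(S.biUnion f) ∧
      (#S = c ∨ ∀ j ∉ S, #(f j \ S.biUnion f) ≤ L) := by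
  induction c with
  | zero => exact ⟨∅, by simp⟩
  | succ c ih =>
    obtain ⟨S, hSc, hSrows, hfull | hlight⟩ := ih
    · by_cases hheavy : ∃ j ∉ S, L < #(f j \ S.biUnion f)
      · obtain ⟨j, hj, hLj⟩ := hheavy
        have hrows : #((insert j S).biUnion f) = #(f j \ S.biUnion f) + #(S.biUnion f) := by
          rw [biUnion_insert, card_sdiff_add_card]
        refine ⟨insert j S, ?_, ?_, Or.inl ?_⟩ <;> rw [card_insert_of_notMem hj]
        · omega
        · rw [hrows, mul_add_one]; omega
        · omega
      · exact ⟨S, by omega, hSrows, Or.inr fun j hj => not_lt.1 fun h => hheavy ⟨j, hj, h⟩⟩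
    · exact ⟨S, by omega, hSrows, Or.inr hlight⟩

lemma card_biUnion_sdiff_le {f : ι → Finset ρ} {A : Finset ρ} {K : Finset ι} {L : ℕ}
    (h : ∀ j ∈ K, #(f j \ A) ≤ L) : #(K.biUnion f \ A) ≤ #K * L :=
  calc #(K.biUnion f \ A) ≤ #(K.biUnion fun j => f j \ A) := card_le_card (by grind)
    _ ≤ ∑ j ∈ K, #(f j \ A) := card_biUnion_le
    _ ≤ #K * L := by simpa using sum_le_card_nsmul K _ L h

lemma exists_card_le_forall_card_biUnion_sdiff_le [DecidableEq ι] [Fintype ρ]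
    (f : ι → Finset ρ) {d e k : ℕ} (hk : 0 < k) (hkd : k ≤ d)
    (hm : k * Fintype.card ρ < (e + 1) * d) :
    ∃ S : Finset ι, #S ≤ d - k ∧
      ∀ K : Finset ι, Disjoint K S → #K ≤ k → #(K.biUnion f \ S.biUnion f) ≤ e := by
  obtain ⟨S, hSc, hSrows, hfull | hlight⟩ := exists_greedy_biUnion f (e / k) (d - k)
  · refine ⟨S, hSc, fun K _ _ => ?_⟩
    by_contra! hbad
    have hcover : #(S.biUnion f) + #(K.biUnion f \ S.biUnion f) ≤ Fintype.card ρ := by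
      rw [add_comm, card_sdiff_add_card]; exact card_le_univ _
    have hdiv : e + 1 ≤ k * (e / k + 1) := Nat.lt_mul_div_succ e hk
    obtain ⟨d', rfl⟩ := Nat.exists_eq_add_of_le hkd
    rw [hfull, Nat.add_sub_cancel_left] at hSrows
    -- `(e+1)·d ≤ k·(e/k+1)·(d-k) + k·(e+1) ≤ k·(#(S.biUnion f) + #(new rows)) ≤ k·m`
    nlinarith [Nat.mul_le_mul_right d' hdiv]
  · refine ⟨S, hSc, fun K hKS hKk => ?_⟩
    calc #(K.biUnion f \ S.biUnion f) ≤ #K * (e / k) :=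
          card_biUnion_sdiff_le fun j hj => hlight j (disjoint_left.1 hKS hj)
      _ ≤ k * (e / k) := Nat.mul_le_mul_right _ hKk
      _ ≤ e := Nat.mul_div_le e k

end Greedy

section Measurement

variable {ρ ι : Type*} [Fintype ρ] [Fintype ι] [DecidableEq ρ]

lemma suppB_orMeasure (M : ρ → ι → Bool) (x : ι → Bool) :
    suppB (orMeasure M x) = (suppB x).biUnion fun j => suppB (M · j) := by
  ext i; simp [suppB, orMeasure, and_comm]

variable [DecidableEq ι]

def boolIndicator (T : Finset ι) : ι → Bool := fun j => decide (j ∈ T)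

@[simp]
lemma suppB_boolIndicator (T : Finset ι) : suppB (boolIndicator T) = T := by
  ext j; simp [suppB, boolIndicator]

lemma closePair_orMeasure_of_subset (M : ρ → ι → Bool) {S T : Finset ι} (hST : S ⊆ T)
    {e0 e1 : ℕ} (hnew : #(T.biUnion (fun j => suppB (M · j)) \
      S.biUnion (fun j => suppB (M · j))) ≤ e1) :
    ClosePair e0 e1 (orMeasure M (boolIndicator T)) (orMeasure M (boolIndicator S)) := by
  simp only [ClosePair, suppB_orMeasure, suppB_boolIndicator,
    sdiff_eq_empty_iff_subset.2 (biUnion_subset_biUnion_of_subset_left _ hST)]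
  exact ⟨by simp, hnew⟩

theorem Resilient.card_add_one_le {M : ρ → ι → Bool} {d e0 e1 e0' e1' : ℕ}
    (hres : Resilient M d e0 e1 e0' e1') (hkd : e1' + 1 ≤ d)
    (hm : (e1' + 1) * Fintype.card ρ < (e1 + 1) * d) :
    Fintype.card ι + 1 ≤ d + e0' := by
  set col : ι → Finset ρ := fun j => suppB (M · j)
  obtain ⟨S, hSd, hSnew⟩ :=
    exists_card_le_forall_card_biUnion_sdiff_le col e1'.succ_pos hkd hm
  obtain ⟨z, hz⟩ := hres (orMeasure M (boolIndicator S))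
  have hdecode : ∀ T, S ⊆ T → #T ≤ d → #(T.biUnion col \ S.biUnion col) ≤ e1 →
      #(suppB z \ T) ≤ e0' ∧ #(T \ suppB z) ≤ e1' := by
    intro T hST hTd hTnew
    by_contra hfar
    refine hz (boolIndicator T) (by simpa using hTd) ?_
      (closePair_orMeasure_of_subset M hST hTnew)
    simpa [ClosePair] using hfar
  have hzS : #(suppB z \ S) ≤ e0' := (hdecode S subset_rfl (by omega) (by simp)).1
  have hrest : #(S ∪ suppB z)ᶜ ≤ e1' := by
    by_contra! hbig
    obtain ⟨K, hK, hKcard⟩ := exists_subset_card_eq (Nat.succ_le_of_lt hbig)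
    have hKS : Disjoint K (S ∪ suppB z) := subset_compl_iff_disjoint_right.1 hK
    have hKT : K ⊆ (S ∪ K) \ suppB z := fun j hj =>
      mem_sdiff.2 ⟨mem_union_right _ hj, disjoint_left.1 (disjoint_union_right.1 hKS).2 hj⟩
    have hT := hdecode (S ∪ K) subset_union_left (card_union_le S K |>.trans (by omega))
      (by rw [union_biUnion, union_sdiff_left]
          exact hSnew K (disjoint_union_right.1 hKS).1 hKcard.le)
    have := card_le_card hKT
    omega
  have hunion : #(S ∪ suppB z) ≤ #S + #(suppB z \ S) := by
    rw [← union_sdiff_self_eq_union]; exact card_union_le _ _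
  have := card_add_card_compl (S ∪ suppB z)
  omega

end Measurement

/-- False-negative trade-off for resilient measurement matrices. -/
theorem stmt14 {m n : ℕ} (M : Fin m → Fin n → Bool) (d e0 e1 e0' e1' : ℕ)
    (h1 : e1' + 1 ≤ d) (h2 : d ≤ n)
    (hres : Resilient M d e0 e1 e0' e1')
    (ε : ℝ) (hε : 0 < ε) :
    (e1 : ℝ) < ((e1' : ℝ) + 1) * (m : ℝ) / (ε * (d : ℝ)) ∨
      (1 - ε) * ((n : ℝ) - (d : ℝ) + 1) / ((e1' : ℝ) + 1) ^ 2 ≤ (e0' : ℝ) := by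
  have hdn : (0 : ℝ) ≤ (n : ℝ) - (d : ℝ) + 1 := by
    have : (d : ℝ) ≤ n := by exact_mod_cast h2
    linarith
  rcases le_or_gt 1 ε with hε1 | hε1
  · refine Or.inr (le_trans ?_ (Nat.cast_nonneg e0'))
    exact div_nonpos_of_nonpos_of_nonneg
      (mul_nonpos_of_nonpos_of_nonneg (by linarith) hdn) (by positivity)
  rw [or_iff_not_imp_left, not_lt]
  intro he1
  have hd : (0 : ℝ) < d := by exact_mod_cast (show 0 < d by omega)
  have hm : (e1' + 1) * m < (e1 + 1) * d := by
    rw [div_le_iff₀ (by positivity)] at he1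
    have : (e1 : ℝ) * (ε * d) ≤ e1 * d := by gcongr; exact mul_le_of_le_one_left hd.le hε1.le
    exact_mod_cast (by linarith : ((e1' : ℝ) + 1) * m < (e1 + 1) * d)
  have hcard := hres.card_add_one_le h1 (by simpa using hm)
  rw [Fintype.card_fin] at hcard
  have hcard' : (n : ℝ) + 1 ≤ d + e0' := by exact_mod_cast hcard
  calc (1 - ε) * ((n : ℝ) - d + 1) / ((e1' : ℝ) + 1) ^ 2 ≤ (1 - ε) * ((n : ℝ) - d + 1) :=
        div_le_self (mul_nonneg (by linarith) hdn) (one_le_pow₀ (by simp))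
    _ ≤ e0' := by nlinarith
end

section
/- (Extended Kautz–Singleton construction.) Let C be a code of length ñ over the alphabet [q] with q^k distinct codewords and minimum Hamming distance d̃, and let u ≥ 1 be an integer. Let φ : [q] → {0,1}^{q^u} map a symbol x to the Boolean vector, indexed by u-tuples (a_1, …, a_u) ∈ [q]^u, whose entry at (a_1, …, a_u) is 1 iff x ∈ {a_1, …, a_u}. Let M be the (ñ·q^u) × q^k Boolean matrix obtained by arranging the codewords of C as the columns of an ñ × q^k matrix over [q] and then replacing each entry x by the column vector φ(x). Then for all integers d ≥ 1 and e ≥ 0 with d + u ≤ q^k and d < (ñ − e)/((ñ − d̃)·u), the matrix M is strongly (d, e; u)-disjunct. -/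
/-- Strongly `(d, e; u)`-disjunct Boolean matrix. -/
def StronglyDisjunct {ρ κ : Type*} [Fintype ρ] [DecidableEq κ]
    (M : ρ → κ → Bool) (d e u : ℕ) : Prop :=
  ∀ U W : Finset κ, U.card = u → W.card = d → Disjoint U W →
    e < (Finset.univ.filter (fun i : ρ =>
      (∀ j ∈ U, M i j = true) ∧ ∀ j ∈ W, M i j = false)).card

/-!
Let `U` (`u` columns) and `W` (`d` columns) be disjoint sets of codewords. Two distinct codewords
agree in at most `ñ - d̃` coordinates, so by the union bound at most `d (ñ - d̃) u` coordinates `i`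
have some word of `U` agreeing with some word of `W`; at each of the remaining more than `e`
coordinates, the row indexed by `i` and the tuple of values of the words of `U` at `i` has a `1` in
every column of `U` and a `0` in every column of `W`.
-/

open Finset

section KautzSingleton

variable {ι α κ : Type*} [Fintype ι] [DecidableEq α]

theorem card_filter_eq_add_hammingDist (x y : ι → α) :
    #{i | x i = y i} + hammingDist x y = Fintype.card ι :=
  card_filter_add_card_filter_not _

def separatingCoords (word : κ → ι → α) (U W : Finset κ) : Finset ι :=
  {i | ∀ j ∈ U, ∀ j' ∈ W, word j i ≠ word j' i}

theorem card_separatingCoords_ge (word : κ → ι → α) (U W : Finset κ) (dt : ℕ)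
    (hdist : ∀ j ∈ U, ∀ j' ∈ W, dt ≤ hammingDist (word j) (word j')) :
    (Fintype.card ι : ℝ) - #U * #W * (Fintype.card ι - dt) ≤ #(separatingCoords word U W) := by
  classical
  set agree := fun j j' => ({i | word j i = word j' i} : Finset ι)
  have hunion : #(separatingCoords word U W)ᶜ ≤ ∑ j ∈ U, ∑ j' ∈ W, #(agree j j') := by
    calc #(separatingCoords word U W)ᶜ ≤ #(U.biUnion fun j => W.biUnion (agree j)) := by
          refine card_le_card fun i hi => ?_
          simpa [separatingCoords, agree] using hi
      _ ≤ ∑ j ∈ U, #(W.biUnion (agree j)) := card_biUnion_le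
      _ ≤ ∑ j ∈ U, ∑ j' ∈ W, #(agree j j') := sum_le_sum fun _ _ => card_biUnion_le
  have hpair : ∀ j ∈ U, ∀ j' ∈ W, (#(agree j j') : ℝ) ≤ Fintype.card ι - dt := by
    intro j hj j' hj'
    have hsplit : (#(agree j j') : ℝ) + hammingDist (word j) (word j') = Fintype.card ι := by
      exact_mod_cast card_filter_eq_add_hammingDist (word j) (word j')
    have hdt : (dt : ℝ) ≤ hammingDist (word j) (word j') := by exact_mod_cast hdist j hj j' hj'
    linarith
  have hcompl : (#(separatingCoords word U W) : ℝ) + #(separatingCoords word U W)ᶜ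
      = Fintype.card ι := by
    exact_mod_cast card_add_card_compl _
  have hsum : ((∑ j ∈ U, ∑ j' ∈ W, #(agree j j') : ℕ) : ℝ) ≤ #U * #W * (Fintype.card ι - dt) := by
    push_cast
    calc ∑ j ∈ U, ∑ j' ∈ W, (#(agree j j') : ℝ)
        ≤ ∑ j ∈ U, ∑ j' ∈ W, ((Fintype.card ι : ℝ) - dt) :=
          sum_le_sum fun j hj => sum_le_sum fun j' hj' => hpair j hj j' hj'
      _ = #U * #W * (Fintype.card ι - dt) := by simp only [sum_const, nsmul_eq_mul]; ring
  have : (#(separatingCoords word U W)ᶜ : ℝ) ≤ ((∑ j ∈ U, ∑ j' ∈ W, #(agree j j') : ℕ) : ℝ) := by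
    exact_mod_cast hunion
  linarith

/-- The codeword matrix with each symbol `x` replaced by the column `φ(x)` indexed by `[q]^u`. -/
def ksMatrix (word : κ → ι → α) (u : ℕ) : ι × (Fin u → α) → κ → Bool :=
  fun p j => decide (∃ s, p.2 s = word j p.1)

theorem card_separatingCoords_le_card_ksMatrix_rows [Fintype α] [DecidableEq κ]
    (word : κ → ι → α) {u : ℕ} (U W : Finset κ) (hU : #U = u) :
    #(separatingCoords word U W) ≤
      #{p | (∀ j ∈ U, ksMatrix word u p j = true) ∧ ∀ j ∈ W, ksMatrix word u p j = false} := by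
  let σ : U ≃ Fin u := U.equivFinOfCardEq hU
  refine card_le_card_of_injOn (fun i => (i, fun s => word (σ.symm s) i)) ?_
    fun _ _ _ _ h => congrArg Prod.fst h
  intro i hi
  simp only [separatingCoords, coe_filter, mem_univ, true_and, Set.mem_ofPred_eq] at hi ⊢
  refine ⟨fun j hj => ?_, fun j' hj' => ?_⟩
  · simpa [ksMatrix] using ⟨σ ⟨j, hj⟩, by simp⟩
  · simpa [ksMatrix] using fun s => hi _ (σ.symm s).2 j' hj'

theorem stronglyDisjunct_ksMatrix [Fintype α] [DecidableEq κ] (word : κ → ι → α)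
    (dt d e u : ℕ) (hdist : ∀ j j', j ≠ j' → dt ≤ hammingDist (word j) (word j'))
    (hcond : (d : ℝ) * (Fintype.card ι - dt) * u < Fintype.card ι - e) :
    StronglyDisjunct (ksMatrix word u) d e u := by
  intro U W hU hW hUW
  have hsep := card_separatingCoords_ge word U W dt fun j hj j' hj' =>
    hdist j j' fun h => disjoint_left.mp hUW hj (h ▸ hj')
  rw [hU, hW] at hsep
  have he : e < #(separatingCoords word U W) := by
    have : (e : ℝ) < #(separatingCoords word U W) := by linarith
    exact_mod_cast this
  exact he.trans_le (card_separatingCoords_le_card_ksMatrix_rows word U W hU)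

end KautzSingleton

theorem stmt15_general (nt q dt u d e : ℕ)
    (C : Finset (Fin nt → Fin q))
    (hdist : ∀ c ∈ C, ∀ c' ∈ C, c ≠ c' → dt ≤ hammingDist c c')
    (M : Fin nt × (Fin u → Fin q) → {c // c ∈ C} → Bool)
    (hM : ∀ p c, M p c = decide (∃ s : Fin u, p.2 s = (c : Fin nt → Fin q) p.1))
    (hcond : (d : ℝ) * ((nt : ℝ) - (dt : ℝ)) * (u : ℝ) < (nt : ℝ) - (e : ℝ)) :
    StronglyDisjunct M d e u := by
  obtain rfl : M = ksMatrix (fun c => c.1) u := funext₂ hM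
  refine stronglyDisjunct_ksMatrix _ dt d e u (fun c c' hne => ?_) (by simpa using hcond)
  exact hdist c c.2 c' c'.2 (Subtype.coe_ne_coe.mpr hne)

/-- Extended Kautz–Singleton construction. -/
theorem stmt15 (nt q k dt u d e : ℕ) (hu : 1 ≤ u) (hd : 1 ≤ d)
    (C : Finset (Fin nt → Fin q)) (hCcard : C.card = q ^ k)
    (hdist : ∀ c ∈ C, ∀ c' ∈ C, c ≠ c' → dt ≤ hammingDist c c')
    (M : Fin nt × (Fin u → Fin q) → {c // c ∈ C} → Bool)
    (hM : ∀ p c, M p c = decide (∃ s : Fin u, p.2 s = (c : Fin nt → Fin q) p.1))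
    (hsize : d + u ≤ q ^ k)
    (hcond : (d : ℝ) * ((nt : ℝ) - (dt : ℝ)) * (u : ℝ) < (nt : ℝ) - (e : ℝ)) :
    StronglyDisjunct M d e u :=
  stmt15_general nt q dt u d e C hdist M hM hcond
end

section
/- Let M be an m×n Boolean matrix that is (d, e; u)-disjunct. Then for every pair of distinct d-sparse vectors x, x' ∈ {0,1}^n such that supp(x) is not contained in supp(x'), the Hamming weight of x is at least |supp(x') \ supp(x)|, and the Hamming weight of x is at least u, we have |supp(M[x]_u) \ supp(M[x']_u)| > e. Conversely, if d ≥ 2u and an m×n Boolean matrix M satisfies |supp(M[x]_u) \ supp(M[x']_u)| > e for every such pair x, x', then M is (⌊d/2⌋, e; u)-disjunct. -/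
/-- Threshold measurement outcome `M[x]_u`. -/
def thrMeasure {m n : ℕ} (M : Fin m → Fin n → Bool) (u : ℕ) (x : Fin n → Bool) :
    Fin m → Bool :=
  fun i => decide (u ≤ (Finset.univ.filter (fun j => M i j = true ∧ x j = true)).card)

/-- Number of ones of row `i` of `M` among the columns in `S`. -/
def rowCount {m n : ℕ} (M : Fin m → Fin n → Bool) (i : Fin m) (S : Finset (Fin n)) : ℕ :=
  (S.filter (fun j => M i j = true)).card

/-- `(d, e; u)`-disjunct matrix (for threshold group testing). -/
def ThrDisjunct {m n : ℕ} (M : Fin m → Fin n → Bool) (d e u : ℕ) : Prop :=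
  ∀ S Z : Finset (Fin n), u ≤ S.card → S.card ≤ d → Z.card ≤ S.card → Disjoint S Z →
    ∀ i ∈ S,
      e < (Finset.univ.filter (fun rr : Fin m =>
        rowCount M rr S = u ∧ rowCount M rr Z = 0 ∧ M rr i = true)).card

lemma thr_card {m n : ℕ} (M : Fin m → Fin n → Bool) (i : Fin m) (x : Fin n → Bool) :
    (Finset.univ.filter (fun j => M i j = true ∧ x j = true)).card = rowCount M i (suppB x) := by
  simp [rowCount, suppB, Finset.filter_filter, and_comm]

lemma rowCount_mono {m n : ℕ} (M : Fin m → Fin n → Bool) (r : Fin m)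
    {A B : Finset (Fin n)} (h : A ⊆ B) : rowCount M r A ≤ rowCount M r B :=
  Finset.card_le_card (Finset.filter_subset_filter _ h)

lemma rowCount_union {m n : ℕ} (M : Fin m → Fin n → Bool) (r : Fin m)
    {A B : Finset (Fin n)} (h : Disjoint A B) :
    rowCount M r (A ∪ B) = rowCount M r A + rowCount M r B := by
  unfold rowCount
  rw [Finset.filter_union, Finset.card_union_of_disjoint (Finset.disjoint_filter_filter h)]

lemma rowCount_split {m n : ℕ} (M : Fin m → Fin n → Bool) (r : Fin m) (S : Finset (Fin n))
    (i : Fin n) (hi : i ∈ S) :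
    rowCount M r S = rowCount M r (S \ {i}) + (M r i).toNat := by
  unfold rowCount
  have h1 : S = insert i (S \ {i}) := by
    rw [Finset.sdiff_singleton_eq_erase, Finset.insert_erase hi]
  conv_lhs => rw [h1]
  rw [Finset.filter_insert]
  by_cases h : M r i = true
  · rw [if_pos h, Finset.card_insert_of_notMem (by simp), h]
    simp
  · rw [if_neg h]
    rw [Bool.not_eq_true] at h
    rw [h]
    simp

lemma mem_supp_thr {m n : ℕ} (M : Fin m → Fin n → Bool) (u : ℕ) (x : Fin n → Bool)
    (r : Fin m) : r ∈ suppB (thrMeasure M u x) ↔ u ≤ rowCount M r (suppB x) := by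
  simp [suppB, thrMeasure, thr_card]

/-- Threshold-disjunct matrices distinguish sparse vectors in the
threshold model, and conversely. -/
theorem stmt16 {m n : ℕ} (M : Fin m → Fin n → Bool) (d e u : ℕ) :
    (ThrDisjunct M d e u →
      ∀ x x' : Fin n → Bool, x ≠ x' →
        (suppB x).card ≤ d → (suppB x').card ≤ d →
        ¬ suppB x ⊆ suppB x' →
        (suppB x' \ suppB x).card ≤ (suppB x).card →
        u ≤ (suppB x).card →
        e < (suppB (thrMeasure M u x) \ suppB (thrMeasure M u x')).card) ∧
    (2 * u ≤ d →
      (∀ x x' : Fin n → Bool, x ≠ x' →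
        (suppB x).card ≤ d → (suppB x').card ≤ d →
        ¬ suppB x ⊆ suppB x' →
        (suppB x' \ suppB x).card ≤ (suppB x).card →
        u ≤ (suppB x).card →
        e < (suppB (thrMeasure M u x) \ suppB (thrMeasure M u x')).card) →
      ThrDisjunct M (d / 2) e u) := by
  constructor
  · intro hD x x' hne hxd hx'd hnsub hdiff hu
    obtain ⟨i, hiS, hiZ⟩ := Finset.not_subset.mp hnsub
    have key := hD (suppB x) (suppB x' \ suppB x) hu hxd hdiff Finset.disjoint_sdiff i hiS
    refine lt_of_lt_of_le key (Finset.card_le_card ?_)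
    intro r hr
    simp only [Finset.mem_filter, Finset.mem_univ, true_and] at hr
    obtain ⟨hS, hZ, hMi⟩ := hr
    rw [Finset.mem_sdiff, mem_supp_thr, mem_supp_thr]
    have hsplit := rowCount_split M r (suppB x) i hiS
    rw [hMi] at hsplit
    have hdecomp : rowCount M r (suppB x') =
        rowCount M r (suppB x' \ suppB x) + rowCount M r (suppB x' ∩ suppB x) := by
      conv_lhs => rw [← Finset.sdiff_union_inter (suppB x') (suppB x)]
      exact rowCount_union M r (Finset.disjoint_sdiff_inter _ _)
    have hmono : rowCount M r (suppB x' ∩ suppB x) ≤ rowCount M r (suppB x \ {i}) := by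
      apply rowCount_mono
      intro j hj
      rw [Finset.mem_inter] at hj
      rw [Finset.mem_sdiff, Finset.mem_singleton]
      exact ⟨hj.2, fun hji => hiZ (hji ▸ hj.1)⟩
    simp only [Bool.toNat_true] at hsplit
    omega
  · intro hd2 hdist S Z huS hSd hZS hdisj i hiS
    have hScard : 1 ≤ S.card := Finset.card_pos.mpr ⟨i, hiS⟩
    set x : Fin n → Bool := fun j => decide (j ∈ S) with hx
    set x' : Fin n → Bool := fun j => decide (j ∈ (S \ {i}) ∪ Z) with hx'
    have hsx : suppB x = S := by ext j; simp [suppB, hx]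
    have hsx' : suppB x' = (S \ {i}) ∪ Z := by ext j; simp [suppB, hx']
    have hiZ : i ∉ Z := Finset.disjoint_left.mp hdisj hiS
    have hix' : i ∉ (S \ {i}) ∪ Z := by simp [hiZ]
    have hdZ : (S \ {i}) ∪ Z ⊆ S ∪ Z := Finset.union_subset_union Finset.sdiff_subset le_rfl
    have hne : x ≠ x' := by
      intro h
      have : (i ∈ S) = (i ∈ (S \ {i}) ∪ Z) := by
        have := congrFun h i
        simpa [hx, hx'] using this
      rw [eq_iff_iff] at this
      exact hix' (this.mp hiS)
    have hsdiff : suppB x' \ suppB x = Z := by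
      rw [hsx, hsx']
      ext j
      simp only [Finset.mem_sdiff, Finset.mem_union, Finset.mem_singleton]
      constructor
      · rintro ⟨h1 | h2, hns⟩
        · exact absurd h1.1 hns
        · exact h2
      · intro hj
        exact ⟨Or.inr hj, Finset.disjoint_right.mp hdisj hj⟩
    have hcard' : (suppB x').card ≤ d := by
      rw [hsx']
      have h1 : (S \ {i}).card = S.card - 1 := by
        rw [Finset.card_sdiff_of_subset (Finset.singleton_subset_iff.mpr hiS), Finset.card_singleton]
      have h2 := Finset.card_union_le (S \ {i}) Z
      have h3 : 2 * (d / 2) ≤ d := Nat.mul_div_le d 2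
      omega
    have key := hdist x x' hne (by rw [hsx]; omega) hcard'
      (by rw [hsx, hsx']; exact fun h => hix' (h hiS))
      (by rw [hsdiff, hsx]; exact hZS) (by rw [hsx]; exact huS)
    refine lt_of_lt_of_le key (Finset.card_le_card ?_)
    intro r hr
    rw [Finset.mem_sdiff, mem_supp_thr, mem_supp_thr, hsx, hsx'] at hr
    obtain ⟨h1, h2⟩ := hr
    rw [not_le] at h2
    simp only [Finset.mem_filter, Finset.mem_univ, true_and]
    have hsplit := rowCount_split M r S i hiS
    have hunion := rowCount_union M r (A := S \ {i}) (B := Z)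
      (Finset.disjoint_of_subset_left Finset.sdiff_subset hdisj)
    rw [hunion] at h2
    have hMi : M r i = true := by
      by_contra h
      rw [Bool.not_eq_true] at h
      rw [h] at hsplit
      simp at hsplit
      omega
    rw [hMi] at hsplit
    simp only [Bool.toNat_true] at hsplit
    exact ⟨by omega, by omega, hMi⟩
end
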